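/- arXiv:2011.00453 — 2 statements merged into one kernel-verified Lean document; each statement's English description precedes it below -/
import Mathlib

section
/- For n ≥ 1 with Tribonacci representation e_1 e_2 ... e_r, the number of occurrences of the letter 0 in the prefix TR[0..n-1] of the Tribonacci word equals [e_1 ... e_{r-1}]_T + e_r, where [w]_T denotes the value of the binary word w interpreted in the Tribonacci numeration system. -/
/-- Tribonacci numbers: T 0 = 0, T 1 = 1, T 2 = 1, T (n+3) = T (n+2) + T (n+1) + T n. -/
def T : ℕ → ℕ
  | 0 => 0
  | 1 => 1
  | 2 => 1
  | n + 3 => T (n + 2) + T (n + 1) + T n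

/-- The Tribonacci morphism on letters: 0 ↦ 01, 1 ↦ 02, 2 ↦ 0. -/
def σm : ℕ → List ℕ
  | 0 => [0, 1]
  | 1 => [0, 2]
  | _ => [0]

/-- The Tribonacci morphism extended to words by concatenation. -/
def σw : List ℕ → List ℕ
  | [] => []
  | a :: t => σm a ++ σw t

/-- The Tribonacci word, the fixed point of σ beginning with 0
(σ^[n+1] [0] has length > n and each σ^[m] [0] is a prefix of the next). -/
def TR (n : ℕ) : ℕ := ((σw^[n + 1]) [0]).getD n 0

/-- Number of occurrences of the letter `a` in the factor TR[i..i+n-1]. -/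
def occ (a i n : ℕ) : ℕ := ((Finset.range n).filter (fun j => TR (i + j) = a)).card

/-- Parikh vector of the factor TR[i..i+n-1], as an element of ℤ³. -/
def ψv (i n : ℕ) : ℤ × ℤ × ℤ := ((occ 0 i n : ℤ), (occ 1 i n : ℤ), (occ 2 i n : ℤ))

/-- Relative Parikh vector f(i,n) = ψ(TR[i..i+n-1]) − ψ(TR[0..n-1]). -/
def frel (i n : ℕ) : ℤ × ℤ × ℤ := ψv i n - ψv 0 n

/-- The set A_n of relative Parikh vectors. -/
def Aset (n : ℕ) : Set (ℤ × ℤ × ℤ) := {v | ∃ i, frel i n = v}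

/-- Abelian complexity of TR: the number of distinct Parikh vectors of length-n factors. -/
noncomputable def ρab (n : ℕ) : ℕ := (Aset n).ncard

/-- Value of a binary word e₁ ⋯ e_r in the Tribonacci numeration system:
[w]_T = Σ_{1 ≤ i ≤ r} e_i T_{r+2-i}.  (Index 0 of the list is e₁.) -/
def valT (w : List ℕ) : ℕ := ∑ i ∈ Finset.range w.length, w.getD i 0 * T (w.length + 1 - i)

/-- `w` is a valid Tribonacci representation: a binary word beginning with 1
and containing no factor 111. -/
def GoodRep (w : List ℕ) : Prop :=
  w.head? = some 1 ∧ (∀ d ∈ w, d ≤ 1) ∧ ¬ ([1, 1, 1] <:+: w)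

/-- The last digit of a word, with the convention that it is 0 for the empty word. -/
def lastDigit (w : List ℕ) : ℕ := w.getD (w.length - 1) 0

/-! Appending a binary digit `e` to `w` turns the prefix `p` of TR of length `[w]_T` into `σ(p)`
followed by `e` more letters; that letter is a `0`, because in TR the word `σ(p)` is followed by
the image of the next letter, and every image starts with `0`. Since `σ` produces one `0` per
letter, one `1` per `0` and one `2` per `1`, induction on `w` shows that the numbers of `0`s and
`1`s in `p` are the values of `w` with the Tribonacci weights shifted down by one and by two
places. -/

lemma σw_append (u v : List ℕ) : σw (u ++ v) = σw u ++ σw v := by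
  induction u with
  | nil => rfl
  | cons a t ih => simp [σw, ih]

lemma σw_singleton (a : ℕ) : σw [a] = σm a := List.append_nil _

lemma exists_σm_eq_zero_cons (a : ℕ) : ∃ t, σm a = 0 :: t := by
  match a with
  | 0 | 1 | _ + 2 => exact ⟨_, rfl⟩

lemma σw_count_zero (u : List ℕ) : (σw u).count 0 = u.length := by
  induction u with
  | nil => rfl
  | cons a t ih =>
    have h : (σm a).count 0 = 1 := by
      match a with
      | 0 | 1 | _ + 2 => rfl
    simp [σw, h, ih, Nat.add_comm]

lemma σw_count_one (u : List ℕ) : (σw u).count 1 = u.count 0 := by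
  induction u with
  | nil => rfl
  | cons a t ih =>
    have h : (σm a).count 1 = if a = 0 then 1 else 0 := by
      match a with
      | 0 | 1 | _ + 2 => rfl
    simp only [σw, List.count_append, h, ih, List.count_cons, beq_iff_eq]
    split <;> omega

lemma σw_length (u : List ℕ) : (σw u).length = u.length + u.count 0 + u.count 1 := by
  induction u with
  | nil => rfl
  | cons a t ih =>
    have h : (σm a).length = 1 + (if a = 0 then 1 else 0) + (if a = 1 then 1 else 0) := by
      match a with
      | 0 | 1 | _ + 2 => rfl
    simp only [σw, List.length_append, h, ih, List.count_cons, beq_iff_eq, List.length_cons]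
    split <;> split <;> omega

lemma σw_prefix {u v : List ℕ} (h : u <+: v) : σw u <+: σw v := by
  obtain ⟨t, rfl⟩ := h
  exact ⟨σw t, (σw_append u t).symm⟩

def σpow (k : ℕ) : List ℕ := σw^[k] [0]

lemma σpow_succ (k : ℕ) : σpow (k + 1) = σw (σpow k) := Function.iterate_succ_apply' _ _ _

lemma σpow_prefix_σpow_succ (k : ℕ) : σpow k <+: σpow (k + 1) := by
  induction k with
  | zero => exact ⟨[1], rfl⟩
  | succ k ih =>
    rw [σpow_succ, σpow_succ]
    exact σw_prefix ih

lemma σpow_prefix_σpow {k l : ℕ} (h : k ≤ l) : σpow k <+: σpow l := by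
  induction l, h using Nat.le_induction with
  | base => exact List.prefix_refl _
  | succ l _ ih => exact ih.trans (σpow_prefix_σpow_succ l)

lemma lt_length_σpow (k : ℕ) : k < (σpow k).length := by
  have key : ∀ k, k < (σpow k).length ∧ 0 < (σpow k).count 0 := by
    intro k
    induction k with
    | zero => decide
    | succ k ih =>
      rw [σpow_succ, σw_length, σw_count_zero]
      omega
  exact (key k).1

lemma getD_of_prefix {u v : List ℕ} (h : u <+: v) {i : ℕ} (hi : i < u.length) :
    v.getD i 0 = u.getD i 0 := by
  obtain ⟨t, rfl⟩ := h
  exact List.getD_append _ _ _ _ hi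

lemma TR_eq_getD_σpow {n k : ℕ} (h : n < (σpow k).length) : TR n = (σpow k).getD n 0 :=
  calc TR n = (σpow (n + 1)).getD n 0 := rfl
    _ = (σpow (max k (n + 1))).getD n 0 :=
        (getD_of_prefix (σpow_prefix_σpow (le_max_right _ _))
          (Nat.lt_of_succ_lt (lt_length_σpow _))).symm
    _ = (σpow k).getD n 0 := getD_of_prefix (σpow_prefix_σpow (le_max_left _ _)) h

def pref (n : ℕ) : List ℕ := (List.range n).map TR

@[simp]
lemma length_pref (n : ℕ) : (pref n).length = n := by simp [pref]

lemma getD_pref {i n : ℕ} (h : i < n) : (pref n).getD i 0 = TR i := by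
  simp [pref, h]

lemma pref_succ (n : ℕ) : pref (n + 1) = pref n ++ [TR n] := by
  simp [pref, List.range_succ]

lemma occ_zero_eq_count (a n : ℕ) : occ a 0 n = (pref n).count a := by
  induction n with
  | zero => rfl
  | succ n ih =>
    rw [occ, Finset.range_add_one, Finset.filter_insert, pref_succ, List.count_append, ← ih, occ]
    by_cases h : TR n = a
    · simp [h, Finset.card_insert_of_notMem]
    · simp [h]

lemma eq_pref_of_prefix_σpow {v : List ℕ} {k : ℕ} (h : v <+: σpow k) : v = pref v.length := by
  refine List.ext_getElem (length_pref _).symm fun i hv _ => ?_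
  rw [← List.getD_eq_getElem _ 0 hv, ← List.getD_eq_getElem _ 0 (by simpa using hv),
    getD_pref hv, TR_eq_getD_σpow (lt_of_lt_of_le hv h.length_le), getD_of_prefix h hv]

lemma pref_prefix_σpow (n : ℕ) : pref n <+: σpow n := by
  have h := eq_pref_of_prefix_σpow (List.take_prefix n (σpow n))
  rw [List.length_take, min_eq_left (lt_length_σpow n).le] at h
  exact h ▸ List.take_prefix _ _

lemma σw_pref (n : ℕ) : σw (pref n) = pref (σw (pref n)).length :=
  eq_pref_of_prefix_σpow (k := n + 1) (σpow_succ n ▸ σw_prefix (pref_prefix_σpow n))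

lemma TR_length_σw_pref (n : ℕ) : TR (σw (pref n)).length = 0 := by
  obtain ⟨t, ht⟩ := exists_σm_eq_zero_cons (TR n)
  have hsucc : σw (pref (n + 1)) = σw (pref n) ++ 0 :: t := by
    rw [pref_succ, σw_append, σw_singleton, ht]
  have hlt : (σw (pref n)).length < (σw (pref (n + 1))).length := by simp [hsucc]
  rw [← getD_pref hlt, ← σw_pref, hsucc, List.getD_append_right _ _ _ _ le_rfl, Nat.sub_self]
  rfl

def valTShift (k : ℕ) (w : List ℕ) : ℕ :=
  ∑ i ∈ Finset.range w.length, w.getD i 0 * T (w.length + 1 - k - i)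

@[simp]
lemma valTShift_zero (w : List ℕ) : valTShift 0 w = valT w := by
  simp [valTShift, valT]

lemma valTShift_concat_succ (k : ℕ) (u : List ℕ) (e : ℕ) :
    valTShift (k + 1) (u ++ [e]) = valTShift k u + e * T (1 - k) := by
  rw [valTShift, List.length_append, List.length_singleton, Finset.sum_range_succ,
    List.getD_append_right _ _ _ _ le_rfl, Nat.sub_self, valTShift]
  congr 1
  · refine Finset.sum_congr rfl fun i hi => ?_
    rw [List.getD_append _ _ _ _ (Finset.mem_range.mp hi)]
    congr 3
    omega
  · congr 2
    omega

lemma valT_concat (u : List ℕ) (e : ℕ) :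
    valT (u ++ [e]) = valT u + valTShift 1 u + valTShift 2 u + e := by
  have hT : ∀ i ∈ Finset.range u.length, u.getD i 0 * T (u.length + 2 - i) =
      u.getD i 0 * T (u.length + 1 - i) + u.getD i 0 * T (u.length + 1 - 1 - i) +
        u.getD i 0 * T (u.length + 1 - 2 - i) := by
    intro i hi
    obtain ⟨j, hj⟩ : ∃ j, u.length + 1 - 2 - i = j := ⟨_, rfl⟩
    have hi := Finset.mem_range.mp hi
    rw [hj, show u.length + 2 - i = j + 3 by omega, show u.length + 1 - i = j + 2 by omega,
      show u.length + 1 - 1 - i = j + 1 by omega, T]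
    ring
  have hsum : ∑ i ∈ Finset.range u.length, (u ++ [e]).getD i 0 * T (u.length + 1 + 1 - i) =
      ∑ i ∈ Finset.range u.length, u.getD i 0 * T (u.length + 2 - i) :=
    Finset.sum_congr rfl fun i hi => by rw [List.getD_append _ _ _ _ (Finset.mem_range.mp hi)]
  rw [valT, List.length_append, List.length_singleton, Finset.sum_range_succ, hsum,
    Finset.sum_congr rfl hT, Finset.sum_add_distrib, Finset.sum_add_distrib,
    List.getD_append_right _ _ _ _ le_rfl, Nat.sub_self,
    show u.length + 1 + 1 - u.length = 2 by omega]
  simp [valT, valTShift, T]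

lemma count_pref_valT {w : List ℕ} (hw : ∀ d ∈ w, d ≤ 1) :
    (pref (valT w)).count 0 = valTShift 1 w ∧ (pref (valT w)).count 1 = valTShift 2 w := by
  induction w using List.reverseRecOn with
  | nil => exact ⟨rfl, rfl⟩
  | append_singleton u e ih =>
    obtain ⟨h0, h1⟩ := ih fun d hd => hw d (List.mem_append_left _ hd)
    have he : e ≤ 1 := hw e (by simp)
    have hlen : (σw (pref (valT u))).length = valT u + valTShift 1 u + valTShift 2 u := by
      rw [σw_length, length_pref, h0, h1]
    have hσ : pref (valT u + valTShift 1 u + valTShift 2 u) = σw (pref (valT u)) := by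
      rw [← hlen, ← σw_pref]
    rw [valT_concat, valTShift_concat_succ, valTShift_concat_succ, valTShift_zero]
    interval_cases e
    · simp [hσ, σw_count_zero, σw_count_one, h0]
    · have hTR := TR_length_σw_pref (valT u)
      rw [hlen] at hTR
      simp [pref_succ, hTR, hσ, σw_count_zero, σw_count_one, h0, T]

lemma occ_zero_valT {w : List ℕ} (hw : ∀ d ∈ w, d ≤ 1) :
    occ 0 0 (valT w) = valT w.dropLast + lastDigit w := by
  rcases List.eq_nil_or_concat' w with rfl | ⟨u, e, rfl⟩
  · rfl
  · rw [occ_zero_eq_count, (count_pref_valT hw).1, valTShift_concat_succ, valTShift_zero,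
      List.dropLast_concat, lastDigit, List.length_append, List.length_singleton,
      Nat.add_sub_cancel, List.getD_append_right _ _ _ _ le_rfl, Nat.sub_self]
    simp [T]

theorem count0_prefix_general (n : ℕ) (w : List ℕ) (hw : GoodRep w) (hv : valT w = n) :
    occ 0 0 n = valT w.dropLast + lastDigit w :=
  hv ▸ occ_zero_valT hw.2.1

/-- For n ≥ 1 with Tribonacci representation e₁ ⋯ e_r,
|TR[0..n-1]|₀ = [e₁ ⋯ e_{r-1}]_T + e_r. -/
theorem count0_prefix (n : ℕ) (hn : 1 ≤ n) (w : List ℕ) (hw : GoodRep w) (hv : valT w = n) :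
    occ 0 0 n = valT w.dropLast + lastDigit w :=
  count0_prefix_general n w hw hv
end

section
/- For all i ≥ 0 and n ≥ 0, the relative Parikh vector f(i,n) = ψ(TR[i..i+n-1]) − ψ(TR[0..n-1]) belongs to the nine-element set A = {(0,0,0), (1,0,−1), (1,−1,0), (0,1,−1), (−1,2,−1), (−1,1,0), (0,−1,1), (−1,0,1), (−1,−1,2)}. -/
/-!
Write `i = |σ(TR[0..a-1])| + s` and `n = |σ(TR[0..b-1])| + t` with `s, t ≤ 1`. Since
`σ(TR[0..k-1])` is again a prefix of `TR`, whose Parikh vector is the incidence matrix of `σ`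
applied to that of `TR[0..k-1]`, the relative Parikh vector of `(i, n)` and the letters of `TR`
around position `i + n` are determined by the same data for `(a, b)` and by `s, t`. So the
states of all pairs lie in the closure of the states of the pairs with `i + n ≤ 2` under this
transition; that closure is finite, and its vectors all lie in `A`.
-/

namespace Tribonacci

theorem σw_append (u v : List ℕ) : σw (u ++ v) = σw u ++ σw v := by
  induction u with
  | nil => rfl
  | cons a u ih => simp [σw, ih]

theorem σw_prefix {u v : List ℕ} (h : u <+: v) : σw u <+: σw v := by
  obtain ⟨w, rfl⟩ := h
  exact ⟨σw w, (σw_append u w).symm⟩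

theorem le_two_of_mem_σw {u : List ℕ} {x : ℕ} (hx : x ∈ σw u) : x ≤ 2 := by
  induction u with
  | nil => simp [σw] at hx
  | cons a u ih =>
    simp only [σw, List.mem_append] at hx
    rcases hx with hx | hx
    · rcases a with _ | _ | a <;> simp [σm] at hx <;> omega
    · exact ih hx

theorem length_add_count_zero_le_length_σw (u : List ℕ) :
    u.length + u.count 0 ≤ (σw u).length := by
  induction u with
  | nil => simp [σw]
  | cons a u ih =>
    rcases a with _ | _ | a <;> simp [σw, σm] <;> omega

def iterWord (m : ℕ) : List ℕ := σw^[m] [0]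

theorem iterWord_succ (m : ℕ) : iterWord (m + 1) = σw (iterWord m) :=
  Function.iterate_succ_apply' σw m [0]

theorem iterWord_prefix_succ (m : ℕ) : iterWord m <+: iterWord (m + 1) := by
  induction m with
  | zero => exact ⟨[1], rfl⟩
  | succ m ih => rw [iterWord_succ, iterWord_succ]; exact σw_prefix ih

theorem iterWord_prefix {m m' : ℕ} (h : m ≤ m') : iterWord m <+: iterWord m' := by
  induction h with
  | refl => exact List.prefix_refl _
  | step _ ih => exact ih.trans (iterWord_prefix_succ _)

theorem lt_length_iterWord (m : ℕ) : m < (iterWord m).length := by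
  induction m with
  | zero => simp [iterWord]
  | succ m ih =>
    have h0 : 0 < (iterWord m).count 0 :=
      List.count_pos_iff.mpr ((iterWord_prefix (Nat.zero_le m)).subset (by simp [iterWord]))
    have := length_add_count_zero_le_length_σw (iterWord m)
    rw [iterWord_succ]; omega

theorem TR_eq_getD {q m : ℕ} (h : q < (iterWord m).length) : TR q = (iterWord m).getD q 0 := by
  have hq : q < (iterWord (q + 1)).length := (lt_length_iterWord (q + 1)).trans' (by omega)
  show (iterWord (q + 1)).getD q 0 = _
  rcases le_total (q + 1) m with hm | hm
  · obtain ⟨w, hw⟩ := iterWord_prefix hm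
    rw [← hw, List.getD_append _ _ _ _ hq]
  · obtain ⟨w, hw⟩ := iterWord_prefix hm
    rw [← hw, List.getD_append _ _ _ _ h]

theorem TR_le_two (q : ℕ) : TR q ≤ 2 := by
  have h : q < (iterWord (q + 1)).length := (lt_length_iterWord (q + 1)).trans' (by omega)
  rw [TR_eq_getD h, List.getD_eq_getElem _ _ h]
  exact le_two_of_mem_σw (u := iterWord q) (by rw [← iterWord_succ]; exact List.getElem_mem h)

def factor (i n : ℕ) : List ℕ := (List.range n).map fun j => TR (i + j)

@[simp] theorem length_factor (i n : ℕ) : (factor i n).length = n := by simp [factor]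

theorem factor_add (i m n : ℕ) : factor i (m + n) = factor i m ++ factor (i + m) n := by
  simp [factor, List.range_add, Nat.add_assoc]

theorem take_factor {m n : ℕ} (i : ℕ) (h : m ≤ n) : (factor i n).take m = factor i m := by
  obtain ⟨k, rfl⟩ := Nat.exists_eq_add_of_le h
  rw [factor_add, List.take_left' (length_factor i m)]

theorem drop_factor {m n : ℕ} (i : ℕ) (h : m ≤ n) :
    (factor i n).drop m = factor (i + m) (n - m) := by
  obtain ⟨k, rfl⟩ := Nat.exists_eq_add_of_le h
  rw [factor_add, List.drop_left' (length_factor i m), Nat.add_sub_cancel_left]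

theorem eq_factor_of_prefix {u : List ℕ} {i n : ℕ} (h : u <+: factor i n) :
    u = factor i u.length := by
  calc u = (factor i n).take u.length := List.prefix_iff_eq_take.mp h
    _ = factor i u.length := take_factor i (by simpa using h.length_le)

theorem factor_zero_length_iterWord (m : ℕ) : factor 0 (iterWord m).length = iterWord m := by
  refine List.ext_getElem (by simp) fun q hq _ => ?_
  simp only [factor, List.getElem_map, List.getElem_range, Nat.zero_add]
  rw [TR_eq_getD (by simpa using hq), List.getD_eq_getElem]

def imageLength (k : ℕ) : ℕ := (σw (factor 0 k)).length

theorem σw_factor_zero (k : ℕ) : σw (factor 0 k) = factor 0 (imageLength k) := by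
  have hk : factor 0 k <+: iterWord k := by
    rw [← factor_zero_length_iterWord k, ← take_factor 0 (lt_length_iterWord k).le]
    exact List.take_prefix _ _
  have himage := σw_prefix hk
  rw [← iterWord_succ, ← factor_zero_length_iterWord] at himage
  exact eq_factor_of_prefix himage

theorem imageLength_add (k m : ℕ) :
    imageLength (k + m) = imageLength k + (σw (factor k m)).length := by
  simp [imageLength, factor_add, σw_append]

theorem σw_factor (k m : ℕ) :
    σw (factor k m) = factor (imageLength k) (σw (factor k m)).length := by
  have h := σw_factor_zero (k + m)
  rw [factor_add, σw_append, Nat.zero_add, σw_factor_zero] at h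
  have := congrArg (List.drop (imageLength k)) h
  rwa [List.drop_left' (length_factor _ _), drop_factor _ (by rw [imageLength_add]; omega),
    imageLength_add, Nat.add_sub_cancel_left, Nat.zero_add] at this

def parikh (u : List ℕ) : ℤ × ℤ × ℤ := (u.count 0, u.count 1, u.count 2)

theorem parikh_append (u v : List ℕ) : parikh (u ++ v) = parikh u + parikh v := by
  simp [parikh]

theorem occ_eq_count (a i n : ℕ) : occ a i n = (factor i n).count a := by
  rw [occ, Finset.card_def, Finset.filter_val, Finset.range_val, Multiset.range,
    Multiset.filter_coe, Multiset.coe_card, factor, List.count, List.countP_map,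
    List.countP_eq_length_filter]
  rfl

def prefixParikh (m : ℕ) : ℤ × ℤ × ℤ := parikh (factor 0 m)

theorem prefixParikh_add (i n : ℕ) :
    prefixParikh (i + n) = prefixParikh i + parikh (factor i n) := by
  rw [prefixParikh, factor_add, parikh_append, Nat.zero_add, prefixParikh]

theorem frel_eq_prefixParikh (i n : ℕ) :
    frel i n = prefixParikh (i + n) - prefixParikh i - prefixParikh n := by
  have hψ (i n : ℕ) : ψv i n = parikh (factor i n) := by simp [ψv, parikh, occ_eq_count]
  rw [frel, hψ, hψ, prefixParikh_add, prefixParikh]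
  abel

def incidence : ℤ × ℤ × ℤ →+ ℤ × ℤ × ℤ :=
  AddMonoidHom.mk' (fun v => (v.1 + v.2.1 + v.2.2, v.1, v.2.1)) fun v w => by
    simp only [Prod.fst_add, Prod.snd_add, Prod.mk_add_mk]; ring_nf

theorem parikh_σw {u : List ℕ} (hu : ∀ x ∈ u, x ≤ 2) :
    parikh (σw u) = incidence (parikh u) := by
  induction u with
  | nil => rfl
  | cons a u ih =>
    have ha : a ≤ 2 := hu a (by simp)
    rw [show a :: u = [a] ++ u from rfl, σw_append, parikh_append, parikh_append, map_add,
      ih fun x hx => hu x (by simp [hx])]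
    congr 1
    interval_cases a <;> rfl

theorem sum_parikh {u : List ℕ} (hu : ∀ x ∈ u, x ≤ 2) :
    (parikh u).1 + (parikh u).2.1 + (parikh u).2.2 = u.length := by
  induction u with
  | nil => rfl
  | cons a u ih =>
    have ha : a ≤ 2 := hu a (by simp)
    have := ih fun x hx => hu x (by simp [hx])
    simp only [parikh, List.count_cons, List.length_cons] at this ⊢
    interval_cases a <;> simp <;> omega

theorem le_two_of_mem_factor {i n x : ℕ} (hx : x ∈ factor i n) : x ≤ 2 := by
  obtain ⟨j, -, rfl⟩ := List.mem_map.mp hx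
  exact TR_le_two _

theorem sum_prefixParikh (m : ℕ) :
    (prefixParikh m).1 + (prefixParikh m).2.1 + (prefixParikh m).2.2 = m := by
  rw [prefixParikh, sum_parikh fun _ => le_two_of_mem_factor, length_factor]

theorem prefixParikh_imageLength (k : ℕ) :
    prefixParikh (imageLength k) = incidence (prefixParikh k) := by
  rw [prefixParikh, ← σw_factor_zero, parikh_σw fun _ => le_two_of_mem_factor, prefixParikh]

theorem imageLength_eq (k : ℕ) : (imageLength k : ℤ) =
    2 * (prefixParikh k).1 + 2 * (prefixParikh k).2.1 + (prefixParikh k).2.2 := by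
  have h := sum_prefixParikh (imageLength k)
  rw [prefixParikh_imageLength] at h
  simp only [incidence, AddMonoidHom.mk'_apply] at h
  linarith

theorem factor_imageLength_add {k m d e : ℕ} (h : d + e ≤ (σw (factor k m)).length) :
    factor (imageLength k + d) e = ((σw (factor k m)).drop d).take e := by
  conv_rhs => rw [σw_factor k m]
  rw [drop_factor _ (by omega), take_factor _ (by omega)]

theorem factor_imageLength {k m e : ℕ} (h : e ≤ (σw (factor k m)).length) :
    factor (imageLength k) e = (σw (factor k m)).take e := by
  simpa using factor_imageLength_add (d := 0) (by omega)

theorem σw_factor_one (k : ℕ) : σw (factor k 1) = σm (TR k) := by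
  simp [factor, σw]

theorem one_le_length_σm (x : ℕ) : 1 ≤ (σm x).length := by
  rcases x with _ | _ | x <;> simp [σm]

theorem length_σm_le_two (x : ℕ) : (σm x).length ≤ 2 := by
  rcases x with _ | _ | x <;> simp [σm]

theorem imageLength_succ (k : ℕ) :
    imageLength (k + 1) = imageLength k + (σm (TR k)).length := by
  rw [imageLength_add, σw_factor_one]

theorem prefixParikh_imageLength_add (k : ℕ) {s : ℕ} (hs : s ≤ 1) :
    prefixParikh (imageLength k + s) = incidence (prefixParikh k) + ((s : ℤ), 0, 0) := by
  have hlen : s ≤ (σw (factor k 1)).length := by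
    rw [σw_factor_one]; exact hs.trans (one_le_length_σm _)
  rw [prefixParikh_add, prefixParikh_imageLength, factor_imageLength hlen, σw_factor_one]
  congr 1
  interval_cases s
  · rfl
  · rcases TR k with _ | _ | x <;> rfl

theorem imageLength_add_imageLength (a b : ℕ) :
    (imageLength a + imageLength b : ℤ) = imageLength (a + b) + (frel a b).2.2 := by
  have ha := sum_prefixParikh a
  have hb := sum_prefixParikh b
  have hab := sum_prefixParikh (a + b)
  rw [imageLength_eq, imageLength_eq, imageLength_eq, frel_eq_prefixParikh]
  simp only [Prod.snd_sub, Nat.cast_add] at *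
  linarith

abbrev State : Type := (ℤ × ℤ × ℤ) × List ℕ

/-- For `i + n = 0` the truncated subtraction makes the window `TR[0..4]`. -/
def stateOf (i n : ℕ) : State := (frel i n, factor (i + n - 1) 5)

/-- For `x = stateOf a b` with `a + b = c + 1`, `imageLength a + imageLength b` equals
`imageLength (c + 1) + (frel a b).2.2`, so the position `(imageLength a + s) + (imageLength b + t)`
lies `jump x s t` letters into `σ(TR[c..c+4])`. -/
def jump (x : State) (s t : ℕ) : ℤ := (σw (x.2.take 1)).length + x.1.2.2 + s + t

def next (x : State) (s t : ℕ) : State :=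
  let j := (jump x s t).toNat
  (incidence (x.1 - parikh (x.2.take 1)) + parikh ((σw x.2).take j) -
      (((s + t : ℕ) : ℤ), 0, 0),
    ((σw x.2).drop (j - 1)).take 5)

theorem imageLength_add_imageLength_eq_add_jump {a b : ℕ} (s t : ℕ) (hab : 1 ≤ a + b) :
    ((imageLength a + s + (imageLength b + t) : ℕ) : ℤ) =
      imageLength (a + b - 1) + jump (stateOf a b) s t := by
  obtain ⟨c, hc⟩ := Nat.exists_eq_add_of_le' hab
  have hwin : (factor c 5).take 1 = factor c 1 := take_factor c (by norm_num)
  have hsum := imageLength_add_imageLength a b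
  rw [hc, imageLength_add] at hsum
  simp only [jump, stateOf, hc, Nat.add_sub_cancel, hwin]
  push_cast at hsum ⊢
  linarith

theorem stateOf_imageLength_add {a b s t : ℕ} (hab : 1 ≤ a + b) (hs : s ≤ 1) (ht : t ≤ 1)
    (hj : 1 ≤ jump (stateOf a b) s t)
    (hj' : jump (stateOf a b) s t + 4 ≤ (σw (stateOf a b).2).length) :
    stateOf (imageLength a + s) (imageLength b + t) = next (stateOf a b) s t := by
  obtain ⟨c, hc⟩ := Nat.exists_eq_add_of_le' hab
  have hx : stateOf a b = (frel a b, factor c 5) := by simp [stateOf, hc]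
  obtain ⟨j, hjz⟩ : ∃ j : ℕ, (j : ℤ) = jump (stateOf a b) s t :=
    ⟨_, Int.toNat_of_nonneg (by omega)⟩
  have hpos := imageLength_add_imageLength_eq_add_jump s t hab
  rw [hc, Nat.add_sub_cancel, ← hjz] at hpos
  rw [hx] at hjz hj hj'
  dsimp only at hj'
  have hPab : prefixParikh (a + b) = prefixParikh c + parikh ((factor c 5).take 1) := by
    rw [hc, prefixParikh_add, take_factor c (by norm_num)]
  have hPc : prefixParikh (imageLength c + j) =
      incidence (prefixParikh c) + parikh ((σw (factor c 5)).take j) := by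
    rw [prefixParikh_add, prefixParikh_imageLength, factor_imageLength (m := 5) (by omega)]
  rw [hx, next, ← hjz, Int.toNat_natCast, stateOf]
  have hsum : imageLength a + s + (imageLength b + t) = imageLength c + j := by omega
  refine Prod.ext ?_ ?_
  · dsimp only
    rw [frel_eq_prefixParikh, frel_eq_prefixParikh, hsum, hPc, hPab,
      prefixParikh_imageLength_add a hs, prefixParikh_imageLength_add b ht]
    have hst : (((s + t : ℕ) : ℤ), (0 : ℤ), (0 : ℤ)) =
        ((s : ℤ), 0, 0) + ((t : ℤ), 0, 0) := by simp
    rw [hst, map_sub, map_sub, map_sub, map_add]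
    abel
  · rw [hsum, show imageLength c + j - 1 = imageLength c + (j - 1) by omega]
    exact factor_imageLength_add (by omega)

theorem exists_eq_imageLength_add (i : ℕ) : ∃ a s, s ≤ 1 ∧ i = imageLength a + s := by
  induction i with
  | zero => exact ⟨0, 0, Nat.zero_le 1, rfl⟩
  | succ i ih =>
    obtain ⟨a, s, hs, rfl⟩ := ih
    have h1 := one_le_length_σm (TR a)
    have h2 := length_σm_le_two (TR a)
    have hsucc := imageLength_succ a
    rcases Nat.lt_or_ge s 1 with h | h
    · exact ⟨a, 1, le_rfl, by omega⟩
    · exact ⟨a + 1, imageLength a + s + 1 - imageLength (a + 1), by omega, by omega⟩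

theorem le_imageLength (k : ℕ) : k ≤ imageLength k := by
  induction k with
  | zero => exact Nat.zero_le _
  | succ k ih => have := one_le_length_σm (TR k); rw [imageLength_succ]; omega

theorem lt_imageLength {k : ℕ} (hk : 1 ≤ k) : k < imageLength k := by
  induction k, hk using Nat.le_induction with
  | base => decide
  | succ k _ ih => have := one_le_length_σm (TR k); rw [imageLength_succ]; omega

theorem add_lt_imageLength_add_imageLength {a b : ℕ} (hab : 1 ≤ a + b) :
    a + b < imageLength a + imageLength b := by
  rcases Nat.eq_zero_or_pos a with rfl | ha
  · exact Nat.add_lt_add_of_le_of_lt (le_imageLength 0) (lt_imageLength (by omega))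
  · exact Nat.add_lt_add_of_lt_of_le (lt_imageLength ha) (le_imageLength b)

def successors (x : State) : List State := [next x 0 0, next x 0 1, next x 1 0, next x 1 1]

def grow (R : List State) : List State := R.flatMap successors ∪ R

def initialStates : List State :=
  (List.range 3).flatMap fun i => (List.range (3 - i)).map (stateOf i)

/-- Thirteen rounds of `grow` already give a list (of 65 states) closed under `next`. -/
def reachable : List State := grow^[13] initialStates

theorem subset_iterate_grow (R : List State) (k : ℕ) : R ⊆ grow^[k] R := by
  induction k with
  | zero => exact List.Subset.refl R
  | succ k ih =>
    rw [Function.iterate_succ_apply']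
    exact fun x hx => List.mem_union_iff.mpr (Or.inr (ih hx))

theorem stateOf_mem_reachable_of_add_lt_three {i n : ℕ} (h : i + n < 3) :
    stateOf i n ∈ reachable := by
  refine subset_iterate_grow _ _ ?_
  simp only [initialStates, List.mem_flatMap, List.mem_map, List.mem_range]
  exact ⟨i, by omega, n, by omega, rfl⟩

theorem reachable_closed : ∀ x ∈ reachable, ∀ s < 2, ∀ t < 2,
    1 ≤ jump x s t ∧ jump x s t + 4 ≤ (σw x.2).length ∧ next x s t ∈ reachable := by
  decide +kernel

theorem fst_mem_of_mem_reachable : ∀ x ∈ reachable, x.1 ∈ [(0, 0, 0), (1, 0, -1), (1, -1, 0),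
    (0, 1, -1), (-1, 2, -1), (-1, 1, 0), (0, -1, 1), (-1, 0, 1), (-1, -1, 2)] := by
  decide +kernel

theorem stateOf_mem_reachable (i n : ℕ) : stateOf i n ∈ reachable := by
  induction h : i + n using Nat.strong_induction_on generalizing i n with
  | _ m ih =>
    rcases Nat.lt_or_ge (i + n) 3 with hsmall | hlarge
    · exact stateOf_mem_reachable_of_add_lt_three hsmall
    obtain ⟨a, s, hs, rfl⟩ := exists_eq_imageLength_add i
    obtain ⟨b, t, ht, rfl⟩ := exists_eq_imageLength_add n
    have hab : 1 ≤ a + b := by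
      by_contra! h0
      obtain ⟨rfl, rfl⟩ : a = 0 ∧ b = 0 := by omega
      have : imageLength 0 = 0 := rfl
      omega
    have hlt : a + b < m := by have := add_lt_imageLength_add_imageLength hab; omega
    obtain ⟨hj, hj', hnext⟩ :=
      reachable_closed _ (ih _ hlt a b rfl) s (by omega) t (by omega)
    rwa [stateOf_imageLength_add hab hs ht hj hj']

end Tribonacci

/-- The relative Parikh vector f(i,n) belongs to the nine-element set A. -/
theorem frel_mem_nine (i n : ℕ) :
    frel i n ∈ ({(0, 0, 0), (1, 0, -1), (1, -1, 0), (0, 1, -1), (-1, 2, -1),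
      (-1, 1, 0), (0, -1, 1), (-1, 0, 1), (-1, -1, 2)} : Set (ℤ × ℤ × ℤ)) := by
  simpa [Tribonacci.stateOf] using
    Tribonacci.fst_mem_of_mem_reachable _ (Tribonacci.stateOf_mem_reachable i n)
end
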